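/- arXiv:0805.2627 — 2 statements merged into one kernel-verified Lean document; each statement's English description precedes it below -/
import Mathlib

section
/- Let (Ω, μ) be a measure space, f : Ω → ℝ a probability density with respect to μ, and A ⊆ B ⊆ Ω measurable sets. Set Loss = ∫_A f dμ and L = ∫_B f dμ, and assume L > 0. Let f̃(x) = 1_B(x) f(x) / L and let Q be the probability measure with density f̃ with respect to μ. Then the weighted random variable w(x) = 1_A(x) f(x) / f̃(x) (interpreted as 0 where f̃ = 0) satisfies w(x) = L · 1_A(x) for Q-almost every x; its mean under Q is Loss, and its variance under Q is Loss · (L − Loss). -/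
open MeasureTheory ProbabilityTheory

/-- Variance is invariant under a.e. equality. -/
lemma variance_congr_ae' {Ω : Type*} [MeasurableSpace Ω] {μ : Measure Ω}
    {X Y : Ω → ℝ} (h : X =ᵐ[μ] Y) : variance X μ = variance Y μ := by
  have hint : μ[X] = μ[Y] := integral_congr_ae h
  unfold ProbabilityTheory.variance ProbabilityTheory.evariance
  congr 1
  refine lintegral_congr_ae (h.mono fun x hx => ?_)
  simp only [hx, hint]

/-- The ISLE weighted random variable `w = 1_A f / f̃`, where `f̃ = 1_B f / L` is the
biasing density and `A ⊆ B` (safety requirement), satisfies `w = L · 1_A` Q-almost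
everywhere, has mean `Loss` and variance `Loss · (L − Loss)` under the biased
probability measure `Q`. -/
theorem isle_weight_mean_variance
    {Ω : Type*} [MeasurableSpace Ω] (μ : Measure Ω)
    (f : Ω → ℝ) (hf_meas : Measurable f) (hf_nonneg : 0 ≤ᵐ[μ] f)
    (hf_int : Integrable f μ) (hf_one : ∫ x, f x ∂μ = 1)
    (A B : Set Ω) (hA : MeasurableSet A) (hB : MeasurableSet B) (hAB : A ⊆ B)
    (Loss L : ℝ) (hLoss : Loss = ∫ x in A, f x ∂μ) (hL : L = ∫ x in B, f x ∂μ)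
    (hL_pos : 0 < L)
    (ftil : Ω → ℝ) (hftil : ftil = fun x => B.indicator (fun _ => (1 : ℝ)) x * f x / L)
    (Q : Measure Ω) (hQ : Q = μ.withDensity fun x => ENNReal.ofReal (ftil x))
    (w : Ω → ℝ)
    (hw : w = fun x =>
      if ftil x = 0 then 0 else A.indicator (fun _ => (1 : ℝ)) x * f x / ftil x) :
    (w =ᵐ[Q] fun x => L * A.indicator (fun _ => (1 : ℝ)) x) ∧
    (∫ x, w x ∂Q) = Loss ∧
    variance w Q = Loss * (L - Loss) := by
  have hL_ne : L ≠ 0 := ne_of_gt hL_pos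
  -- pointwise form of ftil
  have hftil' : ∀ x, ftil x = B.indicator f x / L := by
    intro x; rw [hftil]
    by_cases hx : x ∈ B <;> simp [Set.indicator, hx]
  have hftil'' : ftil = fun x => B.indicator f x / L := funext hftil'
  have hftil_meas : Measurable ftil := by
    rw [hftil'']; exact (hf_meas.indicator hB).div_const L
  have hftil_nonneg : 0 ≤ᵐ[μ] ftil := hf_nonneg.mono fun x hx => by
    rw [hftil']
    exact div_nonneg (Set.indicator_apply_nonneg fun _ => hx) hL_pos.le
  have hftil_int : Integrable ftil μ := by
    rw [hftil'']; exact (hf_int.indicator hB).div_const L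
  -- measure of sets under Q
  have hQs : ∀ s : Set Ω, MeasurableSet s →
      Q s = ENNReal.ofReal (∫ x in s, ftil x ∂μ) := by
    intro s hs
    rw [hQ, withDensity_apply _ hs,
      ← ofReal_integral_eq_lintegral_ofReal (hftil_int.restrict)
        (ae_restrict_of_ae hftil_nonneg)]
  have hLoss_nonneg : 0 ≤ Loss := by
    rw [hLoss]; exact integral_nonneg_of_ae (ae_restrict_of_ae hf_nonneg)
  have hQA : Q A = ENNReal.ofReal (Loss / L) := by
    rw [hQs A hA]
    congr 1
    rw [hftil'']
    rw [integral_div, setIntegral_indicator hB, Set.inter_eq_left.mpr hAB, ← hLoss]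
  have hQAtoReal : (Q A).toReal = Loss / L := by
    rw [hQA, ENNReal.toReal_ofReal (div_nonneg hLoss_nonneg hL_pos.le)]
  have hQuniv : Q Set.univ = 1 := by
    rw [hQs _ MeasurableSet.univ, Measure.restrict_univ, hftil'', integral_div,
      integral_indicator hB, ← hL, div_self hL_ne, ENNReal.ofReal_one]
  haveI hQprob : IsProbabilityMeasure Q := ⟨hQuniv⟩
  -- a.e. equality
  have hzero : Q {x | ftil x = 0} = 0 := by
    have hmeas : MeasurableSet {x | ftil x = 0} :=
      hftil_meas (measurableSet_singleton (0 : ℝ))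
    rw [hQ, withDensity_apply _ hmeas]
    have hzz : ∀ᵐ x ∂μ, x ∈ {x | ftil x = 0} →
        ENNReal.ofReal (ftil x) = (fun _ => (0 : ENNReal)) x :=
      Filter.Eventually.of_forall fun x hx => by
        simp [Set.mem_setOf_eq.mp hx]
    rw [setLIntegral_congr_fun_ae hmeas hzz, lintegral_zero]
  have hpt : ∀ x, ftil x ≠ 0 → w x = L * A.indicator (fun _ => (1 : ℝ)) x := by
    intro x hx
    rw [hw]; simp only [hx, if_false]
    by_cases hxA : x ∈ A
    · have hxB : x ∈ B := hAB hxA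
      have hfx : ftil x = f x / L := by rw [hftil', Set.indicator_of_mem hxB]
      have hfne : f x ≠ 0 := fun h => hx (by rw [hfx, h, zero_div])
      rw [Set.indicator_of_mem hxA, hfx]
      field_simp
    · simp [Set.indicator_of_notMem hxA]
  have hae : w =ᵐ[Q] fun x => L * A.indicator (fun _ => (1 : ℝ)) x := by
    refine measure_mono_null (fun x hx => ?_) hzero
    by_contra h
    exact hx (hpt x h)
  have hIA : (∫ a, A.indicator (fun _ => (1 : ℝ)) a ∂Q) = (Q A).toReal := by
    rw [integral_indicator hA, setIntegral_const, smul_eq_mul, mul_one, measureReal_def]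
  -- mean
  have hmean : (∫ x, w x ∂Q) = Loss := by
    rw [integral_congr_ae hae, integral_const_mul, hIA, hQAtoReal]
    field_simp
  refine ⟨hae, hmean, ?_⟩
  -- variance
  have hg : (fun x => L * A.indicator (fun _ => (1 : ℝ)) x)
      = A.indicator (fun _ => L) := by
    funext x; by_cases hx : x ∈ A <;> simp [hx]
  have hmem : MemLp (fun x => L * A.indicator (fun _ => (1 : ℝ)) x) 2 Q := by
    rw [hg]
    exact memLp_indicator_const 2 hA L (Or.inr (measure_ne_top Q A))
  rw [variance_congr_ae' hae, variance_eq_sub hmem]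
  have hsq : (fun x => L * A.indicator (fun _ => (1 : ℝ)) x) ^ 2
      = fun x => (L ^ 2) * A.indicator (fun _ => (1 : ℝ)) x := by
    funext x; by_cases hx : x ∈ A <;> simp [hx] <;> ring
  have h2 : Q[(fun x => L * A.indicator (fun _ => (1 : ℝ)) x) ^ 2] = L * Loss := by
    rw [hsq, integral_const_mul, hIA, hQAtoReal]
    field_simp
  have h1 : Q[fun x => L * A.indicator (fun _ => (1 : ℝ)) x] = Loss := by
    rw [integral_const_mul, hIA, hQAtoReal]
    field_simp
  rw [h2, h1]
  ring
end

section
/- Let (Ω, μ) be a measure space, f : Ω → ℝ a probability density with respect to μ, and A ⊆ B ⊆ Ω measurable sets with Loss = ∫_A f dμ, L = ∫_B f dμ > 0. Let Y₁, …, Y_N be i.i.d. random variables distributed according to the probability measure Q with density f̃(x) = 1_B(x) f(x)/L. Then the ISLE estimator Loss_N^{ISLE} = (L/N) Σ_{i=1}^N 1_A(Y_i) is unbiased, E[Loss_N^{ISLE}] = Loss, and its variance is Var(Loss_N^{ISLE}) = Loss·(L − Loss)/N; consequently its standard deviation is √(Loss·(L − Loss))/√N. -/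
open MeasureTheory ProbabilityTheory
open scoped NNReal ENNReal

/-- The ISLE estimator `Loss_N^{ISLE} = (L/N) Σ 1_A(Y_i)`, over i.i.d. samples `Y_i`
with law `Q` given by the biasing density `f̃ = 1_B f / L` (with `A ⊆ B`, the safety
requirement), is unbiased with mean `Loss = ∫_A f dμ`, has variance
`Loss (L − Loss) / N`, and standard deviation `√(Loss (L − Loss)) / √N`. -/
theorem isle_estimator_mean_variance
    {Ω Θ : Type*} [MeasurableSpace Ω] [MeasurableSpace Θ]
    (μ : Measure Ω) (P : Measure Θ) [IsProbabilityMeasure P]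
    (f : Ω → ℝ) (hf_meas : Measurable f) (hf_nonneg : 0 ≤ᵐ[μ] f)
    (hf_int : Integrable f μ) (hf_one : ∫ x, f x ∂μ = 1)
    (A B : Set Ω) (hA : MeasurableSet A) (hB : MeasurableSet B) (hAB : A ⊆ B)
    (Loss L : ℝ) (hLoss : Loss = ∫ x in A, f x ∂μ) (hL : L = ∫ x in B, f x ∂μ)
    (hL_pos : 0 < L)
    (N : ℕ) (hN : 0 < N) (Y : Fin N → Θ → Ω)
    (hY_meas : ∀ i, Measurable (Y i))
    (hY_indep : iIndepFun Y P)
    (hY_law : ∀ i, Measure.map (Y i) P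
      = μ.withDensity fun x => ENNReal.ofReal (B.indicator (fun _ => (1 : ℝ)) x * f x / L)) :
    (∫ θ, (L / (N : ℝ)) * ∑ i, A.indicator (fun _ => (1 : ℝ)) (Y i θ) ∂P) = Loss ∧
    variance (fun θ => (L / (N : ℝ)) * ∑ i, A.indicator (fun _ => (1 : ℝ)) (Y i θ)) P
      = Loss * (L - Loss) / N ∧
    Real.sqrt
        (variance (fun θ => (L / (N : ℝ)) * ∑ i, A.indicator (fun _ => (1 : ℝ)) (Y i θ)) P)
      = Real.sqrt (Loss * (L - Loss)) / Real.sqrt N := by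
  have hLne : L ≠ 0 := hL_pos.ne'
  have hNR : (0 : ℝ) < (N : ℝ) := Nat.cast_pos.mpr hN
  set g : Ω → ℝ := A.indicator (fun _ => (1 : ℝ)) with hg_def
  have hg_meas : Measurable g := measurable_const.indicator hA
  set Z : Fin N → Θ → ℝ := fun i θ => g (Y i θ) with hZ_def
  set p : ℝ := Loss / L with hp_def
  -- each Z i is an indicator of a measurable set in Θ
  have hZ_ind : ∀ i, Z i = (Y i ⁻¹' A).indicator (fun _ => (1 : ℝ)) := by
    intro i
    funext θ
    by_cases h : Y i θ ∈ A <;> simp [hZ_def, hg_def, Set.indicator, Set.mem_preimage, h]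
  have hZ_mem : ∀ i, MemLp (Z i) 2 P := by
    intro i
    rw [hZ_ind i]
    exact memLp_indicator_const 2 ((hY_meas i) hA) (1 : ℝ) (Or.inr (measure_ne_top P _))
  -- mean of each Z i
  have hmean : ∀ i, ∫ θ, Z i θ ∂P = p := by
    intro i
    have h1 : ∫ θ, Z i θ ∂P = ∫ x, g x ∂(Measure.map (Y i) P) :=
      (integral_map (hY_meas i).aemeasurable hg_meas.aestronglyMeasurable).symm
    rw [h1, hY_law i]
    have h2 : (fun x => ENNReal.ofReal (B.indicator (fun _ => (1 : ℝ)) x * f x / L))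
        = fun x => ((Real.toNNReal (B.indicator (fun _ => (1 : ℝ)) x * f x / L) : ℝ≥0) : ℝ≥0∞) := by
      rfl
    rw [h2, integral_withDensity_eq_integral_smul
      (by
        apply Measurable.real_toNNReal
        exact ((measurable_const.indicator hB).mul hf_meas).div_const L) g]
    have h3 : ∀ᵐ x ∂μ, (Real.toNNReal (B.indicator (fun _ => (1 : ℝ)) x * f x / L)) • g x
        = A.indicator f x / L := by
      filter_upwards [hf_nonneg] with x hx
      have hBnn : 0 ≤ B.indicator (fun _ => (1 : ℝ)) x := Set.indicator_nonneg (by intros; norm_num) x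
      rw [NNReal.smul_def, Real.coe_toNNReal _ (div_nonneg (mul_nonneg hBnn hx) hL_pos.le)]
      by_cases hxA : x ∈ A
      · simp [hg_def, Set.indicator_of_mem hxA, Set.indicator_of_mem (hAB hxA)]
      · simp [hg_def, Set.indicator_of_notMem hxA]
    rw [integral_congr_ae h3]
    rw [integral_div, integral_indicator hA, ← hLoss, hp_def]
  -- Z i squared equals Z i
  have hZ_sq : ∀ i θ, Z i θ ^ 2 = Z i θ := by
    intro i θ
    by_cases h : Y i θ ∈ A <;> simp [hZ_def, hg_def, h]
  -- variance of each Z i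
  have hvar : ∀ i, variance (Z i) P = p - p ^ 2 := by
    intro i
    rw [variance_eq_sub (hZ_mem i)]
    have : Z i ^ 2 = Z i := funext fun θ => hZ_sq i θ
    rw [this, hmean i]
  -- integrability
  have hZ_int : ∀ i, Integrable (Z i) P := fun i => (hZ_mem i).integrable one_le_two
  -- rewrite the estimator
  have hS : (fun θ => (L / (N : ℝ)) * ∑ i, A.indicator (fun _ => (1 : ℝ)) (Y i θ))
      = fun θ => (L / (N : ℝ)) * ∑ i, Z i θ := by
    funext θ
    simp [hZ_def, hg_def]
  have hNne : (N : ℝ) ≠ 0 := hNR.ne'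
  have hSfun : (∑ i, Z i) = fun θ => ∑ i, Z i θ := by
    funext θ; simp
  have hmean_sum : ∫ θ, ∑ i, Z i θ ∂P = N * p := by
    rw [integral_finset_sum _ fun i _ => hZ_int i]
    simp [hmean, Finset.card_univ]
  have hvar_sum : variance (fun θ => ∑ i, Z i θ) P = N * (p - p ^ 2) := by
    rw [← hSfun, IndepFun.variance_sum (fun i _ => hZ_mem i)
      (fun i _ j _ hij => (hY_indep.indepFun hij).comp hg_meas hg_meas)]
    simp [hvar, Finset.card_univ]
    ring
  have hp_val : L * p = Loss := by rw [hp_def]; field_simp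
  constructor
  · rw [hS, integral_const_mul, hmean_sum, hp_def]
    field_simp
  have hvar_total : variance (fun θ => (L / (N : ℝ)) * ∑ i, A.indicator (fun _ => (1 : ℝ)) (Y i θ)) P
      = Loss * (L - Loss) / N := by
    rw [hS, variance_const_mul, hvar_sum, hp_def]
    field_simp
  refine ⟨hvar_total, ?_⟩
  have hnn : 0 ≤ Loss * (L - Loss) := by
    have := variance_nonneg (fun θ => (L / (N : ℝ)) * ∑ i, A.indicator (fun _ => (1 : ℝ)) (Y i θ)) P
    rw [hvar_total] at this
    have := (div_nonneg_iff.mp this)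
    rcases this with ⟨h1, _⟩ | ⟨_, h2⟩
    · exact h1
    · nlinarith
  rw [hvar_total, Real.sqrt_div hnn]
end
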